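/- In the Weil algebra A = ℝ[X,Y]/(X³Y, X²Y², Y⁴, X³−Y³), the monomials 1, X, Y, X², XY, Y², X³, X²Y, XY², X⁴ form an ℝ-vector space basis of A; in particular dim_ℝ A = 10, X⁴ ≠ 0 and X⁵ = 0. -/

import Mathlib

/-- The Weil algebra `A = ℝ[X,Y]/(X³Y, X²Y², Y⁴, X³−Y³)`. -/
noncomputable abbrev WB : Type :=
  MvPolynomial (Fin 2) ℝ ⧸
    (Ideal.span {(MvPolynomial.X 0 : MvPolynomial (Fin 2) ℝ) ^ 3 * MvPolynomial.X 1,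
      (MvPolynomial.X 0) ^ 2 * (MvPolynomial.X 1) ^ 2, (MvPolynomial.X 1) ^ 4,
      (MvPolynomial.X 0) ^ 3 - (MvPolynomial.X 1) ^ 3} : Ideal (MvPolynomial (Fin 2) ℝ))

/-- The residue class of `X`. -/
noncomputable def bx : WB := Ideal.Quotient.mk _ (MvPolynomial.X 0)

/-- The residue class of `Y`. -/
noncomputable def bY : WB := Ideal.Quotient.mk _ (MvPolynomial.X 1)

/-- The maximal (nilpotent) ideal `𝔫 = (X, Y)` of `A`. -/
noncomputable def mIdeal : Ideal WB := Ideal.span {bx, bY}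

/-- The ten monomials `1, X, Y, X², XY, Y², X³, X²Y, XY², X⁴` in `A`. -/
noncomputable def monos : Fin 10 → WB :=
  ![1, bx, bY, bx ^ 2, bx * bY, bY ^ 2, bx ^ 3, bx ^ 2 * bY, bx * bY ^ 2, bx ^ 4]

/-!
The span of the ten monomials contains `1` and, by the relations `X³Y = X²Y² = 0`, `Y³ = X³`,
`XY³ = X⁴` and `X⁵ = 0`, is stable under multiplication by `X` and `Y`; hence it is all of `A`.
For independence, take the ten linear functionals on `ℝ[X,Y]` reading off the coefficients of
`1, X, Y, X², XY, Y², X²Y, XY²` and the sums `c(X³) + c(Y³)`, `c(X⁴) + c(XY³)`. They vanish on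
`q · g` for every generator `g` of the ideal and every polynomial `q`, so they descend to `A`,
where they form the dual family of the monomials.
-/

open MvPolynomial Submodule

theorem LinearIndependent.of_ker_le {K M N Q ι : Type*} [Ring K] [AddCommGroup M]
    [AddCommGroup N] [AddCommGroup Q] [Module K M] [Module K N] [Module K Q]
    (π : M →ₗ[K] Q) (φ : M →ₗ[K] N) (hker : LinearMap.ker π ≤ LinearMap.ker φ) {v : ι → M}
    (hv : LinearIndependent K (φ ∘ v)) : LinearIndependent K (π ∘ v) := by
  rw [linearIndependent_iff] at hv ⊢
  intro l hl
  apply hv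
  rw [← Finsupp.apply_linearCombination] at hl ⊢
  exact hker hl

theorem Submodule.span_eq_top_of_adjoin_eq_top {R A : Type*} [CommSemiring R] [Semiring A]
    [Algebra R A] {s : Set A} (hs : Algebra.adjoin R s = ⊤) {v : Set A} (h1 : 1 ∈ span R v)
    (hmul : ∀ x ∈ s, ∀ y ∈ v, x * y ∈ span R v) : span R v = ⊤ := by
  have hgen : ∀ x ∈ s, ∀ y ∈ span R v, x * y ∈ span R v := fun x hx =>
    span_le (p := (span R v).comap (LinearMap.mulLeft R x)).mpr (hmul x hx)
  have hadjoin : ∀ a ∈ Algebra.adjoin R s, ∀ y ∈ span R v, a * y ∈ span R v := by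
    intro a ha
    induction ha using Algebra.adjoin_induction with
    | mem x hx => exact hgen x hx
    | algebraMap r => intro y hy; simpa [Algebra.smul_def] using smul_mem _ r hy
    | add a b _ _ ha hb => intro y hy; rw [add_mul]; exact add_mem (ha y hy) (hb y hy)
    | mul a b _ _ ha hb => intro y hy; rw [mul_assoc]; exact ha _ (hb y hy)
  refine eq_top_iff.mpr fun a _ => ?_
  simpa using hadjoin a (hs ▸ Algebra.mem_top) 1 h1

noncomputable def expXY (a b : ℕ) : Fin 2 →₀ ℕ := Finsupp.single 0 a + Finsupp.single 1 b

lemma expXY_le_expXY {a b c d : ℕ} : expXY c d ≤ expXY a b ↔ c ≤ a ∧ d ≤ b := by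
  simp [expXY, Finsupp.le_def, Fin.forall_fin_two]

lemma expXY_sub_expXY (a b c d : ℕ) : expXY a b - expXY c d = expXY (a - c) (b - d) := by
  ext i; fin_cases i <;> simp [expXY]

lemma expXY_inj {a b c d : ℕ} : expXY c d = expXY a b ↔ c = a ∧ d = b := by
  simp [expXY, Finsupp.ext_iff, Fin.forall_fin_two]

lemma X_pow_mul_X_pow_eq_monomial {R : Type*} [CommSemiring R] (a b : ℕ) :
    (X 0 ^ a * X 1 ^ b : MvPolynomial (Fin 2) R) = monomial (expXY a b) 1 := by
  simp [X_pow_eq_monomial, monomial_mul, expXY]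

noncomputable abbrev weilGenerators : Set (MvPolynomial (Fin 2) ℝ) :=
  {X 0 ^ 3 * X 1, X 0 ^ 2 * X 1 ^ 2, X 1 ^ 4, X 0 ^ 3 - X 1 ^ 3}

noncomputable abbrev weilIdeal : Ideal (MvPolynomial (Fin 2) ℝ) := Ideal.span weilGenerators

lemma weilGenerators_eq_monomials :
    weilGenerators =
      {monomial (expXY 3 1) 1, monomial (expXY 2 2) 1, monomial (expXY 0 4) 1,
        monomial (expXY 3 0) 1 - monomial (expXY 0 3) 1} := by
  simp only [← X_pow_mul_X_pow_eq_monomial, pow_zero, pow_one, one_mul, mul_one]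

lemma mk_eq_zero_of_mem_weilGenerators {g : MvPolynomial (Fin 2) ℝ} (hg : g ∈ weilGenerators) :
    Ideal.Quotient.mk weilIdeal g = 0 :=
  Ideal.Quotient.eq_zero_iff_mem.mpr (Ideal.subset_span hg)

lemma bx_pow_three_mul_bY : bx ^ 3 * bY = 0 := mk_eq_zero_of_mem_weilGenerators (by simp)

lemma bx_sq_mul_bY_sq : bx ^ 2 * bY ^ 2 = 0 := mk_eq_zero_of_mem_weilGenerators (by simp)

lemma bx_pow_three : bx ^ 3 = bY ^ 3 := sub_eq_zero.mp (mk_eq_zero_of_mem_weilGenerators (by simp))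

lemma bx_pow_five : bx ^ 5 = 0 := by
  linear_combination bx ^ 2 * bx_pow_three + bY * bx_sq_mul_bY_sq

lemma adjoin_bx_bY : Algebra.adjoin ℝ {bx, bY} = ⊤ := by
  have h : ({bx, bY} : Set WB) = Ideal.Quotient.mkₐ ℝ weilIdeal '' Set.range X := by
    ext; simp [← Set.range_comp, Fin.exists_fin_two, bx, bY, eq_comm]
  rw [h, ← AlgHom.map_adjoin, adjoin_range_X, Algebra.map_top, AlgHom.range_eq_top]
  exact Ideal.Quotient.mkₐ_surjective ℝ _

lemma span_range_monos : span ℝ (Set.range monos) = ⊤ := by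
  refine span_eq_top_of_adjoin_eq_top adjoin_bx_bY (subset_span ⟨0, rfl⟩) ?_
  have mem : ∀ (j : Fin 10) {a : WB}, a = monos j → a ∈ span ℝ (Set.range monos) :=
    fun j a h => h ▸ subset_span ⟨j, rfl⟩
  have zero : ∀ {a : WB}, a = 0 → a ∈ span ℝ (Set.range monos) := fun h => h ▸ zero_mem _
  simp only [Set.mem_insert_iff, Set.mem_singleton_iff, forall_eq_or_imp, forall_eq,
    Set.forall_mem_range]
  constructor <;> intro i <;> fin_cases i <;> simp only [monos, Fin.reduceFinMk, Matrix.cons_val]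
  · exact mem 1 (mul_one bx)
  · exact mem 3 (sq bx).symm
  · exact mem 4 rfl
  · exact mem 6 (pow_succ' bx 2).symm
  · exact mem 7 (by ring : bx * (bx * bY) = bx ^ 2 * bY)
  · exact mem 8 rfl
  · exact mem 9 (pow_succ' bx 3).symm
  · exact zero (by linear_combination bx_pow_three_mul_bY)
  · exact zero (by linear_combination bx_sq_mul_bY_sq)
  · exact zero (by linear_combination bx_pow_five)
  · exact mem 2 (mul_one bY)
  · exact mem 4 (mul_comm bY bx)
  · exact mem 5 (sq bY).symm
  · exact mem 7 (mul_comm bY _)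
  · exact mem 8 (by ring : bY * (bx * bY) = bx * bY ^ 2)
  · exact mem 6 (by linear_combination bx_pow_three.symm : bY * bY ^ 2 = bx ^ 3)
  · exact zero (by linear_combination bx_pow_three_mul_bY)
  · exact zero (by linear_combination bx_sq_mul_bY_sq)
  · exact mem 9 (by linear_combination -bx * bx_pow_three : bY * (bx * bY ^ 2) = bx ^ 4)
  · exact zero (by linear_combination bx * bx_pow_three_mul_bY)

def monosExp : Fin 10 → ℕ × ℕ :=
  ![(0, 0), (1, 0), (0, 1), (2, 0), (1, 1), (0, 2), (3, 0), (2, 1), (1, 2), (4, 0)]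

noncomputable def liftMonos (i : Fin 10) : MvPolynomial (Fin 2) ℝ :=
  monomial (expXY (monosExp i).1 (monosExp i).2) 1

lemma mk_comp_liftMonos : Ideal.Quotient.mkₐ ℝ weilIdeal ∘ liftMonos = monos := by
  ext i
  fin_cases i <;> simp [liftMonos, monosExp, monos, bx, bY, ← X_pow_mul_X_pow_eq_monomial]

noncomputable def dualCoord : MvPolynomial (Fin 2) ℝ →ₗ[ℝ] Fin 10 → ℝ :=
  let c a b := lcoeff ℝ (expXY a b)
  LinearMap.pi
    ![c 0 0, c 1 0, c 0 1, c 2 0, c 1 1, c 0 2, c 3 0 + c 0 3, c 2 1, c 1 2, c 4 0 + c 1 3]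

lemma dualCoord_liftMonos (i : Fin 10) : dualCoord (liftMonos i) = Pi.single i 1 := by
  ext j
  fin_cases i <;> fin_cases j <;> simp [dualCoord, liftMonos, monosExp, coeff_monomial, expXY_inj]

lemma dualCoord_mul_generator (q : MvPolynomial (Fin 2) ℝ) {g : MvPolynomial (Fin 2) ℝ}
    (hg : g ∈ weilGenerators) : dualCoord (q * g) = 0 := by
  simp only [weilGenerators_eq_monomials, Set.mem_insert_iff, Set.mem_singleton_iff] at hg
  ext j
  rcases hg with rfl | rfl | rfl | rfl <;> fin_cases j <;>
    simp [dualCoord, mul_sub, coeff_mul_monomial', expXY_le_expXY, expXY_sub_expXY]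

lemma dualCoord_eq_zero_of_mem {p : MvPolynomial (Fin 2) ℝ} (hp : p ∈ weilIdeal) :
    dualCoord p = 0 := by
  suffices ∀ q, dualCoord (q * p) = 0 by simpa using this 1
  induction hp using Submodule.span_induction with
  | mem g hg => exact fun q => dualCoord_mul_generator q hg
  | zero => simp
  | add a b _ _ ha hb => intro q; rw [mul_add, map_add, ha, hb, add_zero]
  | smul r a _ ha => intro q; rw [smul_eq_mul, ← mul_assoc]; exact ha _

lemma linearIndependent_monos : LinearIndependent ℝ monos := by
  rw [← mk_comp_liftMonos]
  refine LinearIndependent.of_ker_le (Ideal.Quotient.mkₐ ℝ weilIdeal).toLinearMap dualCoord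
    (fun p hp => dualCoord_eq_zero_of_mem (Ideal.Quotient.eq_zero_iff_mem.mp hp)) ?_
  simpa [Function.comp_def, dualCoord_liftMonos] using Pi.linearIndependent_single_one (Fin 10) ℝ

/-- In `A = ℝ[X,Y]/(X³Y, X²Y², Y⁴, X³−Y³)`, the monomials
`1, X, Y, X², XY, Y², X³, X²Y, XY², X⁴` form an ℝ-vector space basis; in particular
`dim_ℝ A = 10`, `X⁴ ≠ 0` and `X⁵ = 0`. -/
theorem stmt17 :
    (∃ bas : Module.Basis (Fin 10) ℝ WB, ∀ i, bas i = monos i) ∧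
    Module.finrank ℝ WB = 10 ∧ bx ^ 4 ≠ 0 ∧ bx ^ 5 = 0 := by
  let bas := Module.Basis.mk linearIndependent_monos span_range_monos.ge
  refine ⟨⟨bas, Module.Basis.mk_apply _ _⟩, ?_, ?_, bx_pow_five⟩
  · rw [Module.finrank_eq_card_basis bas, Fintype.card_fin]
  · simpa [bas, monos] using bas.ne_zero 9
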